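/- arXiv:1112.2065 — 2 statements merged into one kernel-verified Lean document; each statement's English description precedes it below -/
import Mathlib

section
/- Truncated termination over the order: assume X is finite and let P be endowed with a monomial Σ-ordering. Let I ⊆ P be an ord-graded Σ-ideal and fix d ∈ ℕ. If I has an ord-homogeneous Σ-basis H such that H_d = {f ∈ H : ord(f) ≤ d} is finite, then I has an ord-homogeneous Gröbner Σ-basis G such that G_d = {f ∈ G : ord(f) ≤ d} is finite. -/
/- Common setup: the monoid Σ = ⟨σ₁,…,σ_r⟩ ≅ (ℕ^r,+) is modelled additively as
`Fin r → ℕ`; the algebra of partial difference polynomials `P = K[X(Σ)]` is the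
polynomial ring `MvPolynomial (X × (Fin r → ℕ)) K`, and its monomials are elements
of `(X × (Fin r → ℕ)) →₀ ℕ`. -/

noncomputable section

/-- The total degree `deg : Σ → ℕ` of an element of the monoid `Σ ≅ ℕ^r`. -/
def degS {r : ℕ} (σ : Fin r → ℕ) : ℕ := ∑ i, σ i

/-- The shift action of `σ ∈ Σ` on monomials: `σ · ∏ xᵢ(τᵢ)^{aᵢ} = ∏ xᵢ(στᵢ)^{aᵢ}`. -/
def shiftMon {V : Type*} {r : ℕ} (σ : Fin r → ℕ) (m : (V × (Fin r → ℕ)) →₀ ℕ) :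
    (V × (Fin r → ℕ)) →₀ ℕ :=
  Finsupp.mapDomain (fun p => (p.1, σ + p.2)) m

/-- The shift action of `σ ∈ Σ` on `P` by `K`-algebra endomorphisms,
determined by `σ · x(τ) = x(στ)`. -/
def shiftPoly (K : Type*) [CommSemiring K] {V : Type*} {r : ℕ} (σ : Fin r → ℕ) :
    MvPolynomial (V × (Fin r → ℕ)) K →ₐ[K] MvPolynomial (V × (Fin r → ℕ)) K :=
  MvPolynomial.rename (fun p => (p.1, σ + p.2))

/-- The orbit set `Σ · G` of a set of polynomials `G`. -/
def shiftSet (K : Type*) [CommSemiring K] {V : Type*} {r : ℕ}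
    (G : Set (MvPolynomial (V × (Fin r → ℕ)) K)) :
    Set (MvPolynomial (V × (Fin r → ℕ)) K) :=
  {p | ∃ (σ : Fin r → ℕ) (g : MvPolynomial (V × (Fin r → ℕ)) K), g ∈ G ∧ p = shiftPoly K σ g}

/-- The least common multiple of two monomials (pointwise maximum of exponents). -/
def lcmMon {V : Type*} {r : ℕ} (m n : (V × (Fin r → ℕ)) →₀ ℕ) : (V × (Fin r → ℕ)) →₀ ℕ :=
  Finsupp.zipWith max (max_self 0) m n

/-- The greatest common divisor of two monomials (pointwise minimum of exponents). -/
def gcdMon {V : Type*} {r : ℕ} (m n : (V × (Fin r → ℕ)) →₀ ℕ) : (V × (Fin r → ℕ)) →₀ ℕ :=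
  Finsupp.zipWith min (min_self 0) m n

/-- The strict relation of a linear order given as a term. -/
def oLT {α : Type*} (lo : LinearOrder α) (a b : α) : Prop := lo.lt a b

/-- The non-strict relation of a linear order given as a term. -/
def oLE {α : Type*} (lo : LinearOrder α) (a b : α) : Prop := lo.le a b

/-- `lo` is a *monomial ordering* of an additive (monomial) monoid: a linear order
which is a well-order, has the monomial `1` (written additively: `0`) as least
element, and is compatible with multiplication (written additively). -/
structure IsMonOrd {α : Type*} [AddCommMonoid α] (lo : LinearOrder α) : Prop where
  wf : WellFounded (oLT lo)
  zero_le : ∀ a : α, oLE lo 0 a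
  add_lt : ∀ a b c : α, oLT lo a b → oLT lo (c + a) (c + b)

/-- The leading monomial of a polynomial with respect to a monomial ordering
(junk value `1`, i.e. `0`, on the zero polynomial). -/
def lmo {K V : Type*} [CommSemiring K] {r : ℕ} (lo : LinearOrder ((V × (Fin r → ℕ)) →₀ ℕ))
    (f : MvPolynomial (V × (Fin r → ℕ)) K) : (V × (Fin r → ℕ)) →₀ ℕ :=
  haveI : Decidable (f = 0) := Classical.dec _
  if h : f = 0 then 0
  else @Finset.max' _ lo f.support
    (Finset.nonempty_iff_ne_empty.2 fun he => h (MvPolynomial.support_eq_empty.mp he))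

/-- The leading coefficient of a polynomial. -/
def lco {K V : Type*} [CommSemiring K] {r : ℕ} (lo : LinearOrder ((V × (Fin r → ℕ)) →₀ ℕ))
    (f : MvPolynomial (V × (Fin r → ℕ)) K) : K :=
  MvPolynomial.coeff (lmo lo f) f

/-- The S-polynomial `spoly(f,g) = (l/lt(f))·f − (l/lt(g))·g`, where
`l = lcm(lm f, lm g)`. -/
def spoly {K V : Type*} [Field K] {r : ℕ} (lo : LinearOrder ((V × (Fin r → ℕ)) →₀ ℕ))
    (f g : MvPolynomial (V × (Fin r → ℕ)) K) : MvPolynomial (V × (Fin r → ℕ)) K :=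
  MvPolynomial.monomial (lcmMon (lmo lo f) (lmo lo g) - lmo lo f) (lco lo f)⁻¹ * f -
  MvPolynomial.monomial (lcmMon (lmo lo f) (lmo lo g) - lmo lo g) (lco lo g)⁻¹ * g

/-- `f` has a Gröbner representation `f = ∑ qᵢ gᵢ` with respect to `G`:
`gᵢ ∈ G` and `lm(f) ⪰ lm(qᵢ)·lm(gᵢ)` for all (nontrivial) `i`. -/
def HasGroebnerRep {K V : Type*} [Field K] {r : ℕ}
    (lo : LinearOrder ((V × (Fin r → ℕ)) →₀ ℕ))
    (G : Set (MvPolynomial (V × (Fin r → ℕ)) K))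
    (f : MvPolynomial (V × (Fin r → ℕ)) K) : Prop :=
  ∃ (n : ℕ) (q g : Fin n → MvPolynomial (V × (Fin r → ℕ)) K),
    (∀ i, g i ∈ G) ∧ f = ∑ i, q i * g i ∧
    ∀ i, q i ≠ 0 → g i ≠ 0 → oLE lo (lmo lo (q i) + lmo lo (g i)) (lmo lo f)

/-- The ideal `LM(S)` generated by the leading monomials of the nonzero elements
of `S`. -/
def lmIdeal {K V : Type*} [Field K] {r : ℕ} (lo : LinearOrder ((V × (Fin r → ℕ)) →₀ ℕ))
    (S : Set (MvPolynomial (V × (Fin r → ℕ)) K)) : Ideal (MvPolynomial (V × (Fin r → ℕ)) K) :=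
  Ideal.span ((fun g => (MvPolynomial.monomial (lmo lo g) (1 : K))) '' {g | g ∈ S ∧ g ≠ 0})

/-- `G ⊆ I` is a Gröbner basis of `I`: `LM(I)` is generated by `lm(G)`. -/
def IsGBasis {K V : Type*} [Field K] {r : ℕ} (lo : LinearOrder ((V × (Fin r → ℕ)) →₀ ℕ))
    (G : Set (MvPolynomial (V × (Fin r → ℕ)) K))
    (I : Ideal (MvPolynomial (V × (Fin r → ℕ)) K)) : Prop :=
  G ⊆ ↑I ∧ lmIdeal lo (I : Set (MvPolynomial (V × (Fin r → ℕ)) K)) = lmIdeal lo G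

/-- `G ⊆ I` is a Gröbner Σ-basis of `I`: `LM(I)` is generated by `Σ·lm(G)`. -/
def IsSigmaGBasis {K V : Type*} [Field K] {r : ℕ} (lo : LinearOrder ((V × (Fin r → ℕ)) →₀ ℕ))
    (G : Set (MvPolynomial (V × (Fin r → ℕ)) K))
    (I : Ideal (MvPolynomial (V × (Fin r → ℕ)) K)) : Prop :=
  G ⊆ ↑I ∧
  lmIdeal lo (I : Set (MvPolynomial (V × (Fin r → ℕ)) K)) =
    Ideal.span {p | ∃ (σ : Fin r → ℕ) (g : MvPolynomial (V × (Fin r → ℕ)) K),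
      g ∈ G ∧ g ≠ 0 ∧ p = MvPolynomial.monomial (shiftMon σ (lmo lo g)) (1 : K)}

/-- `I` is a Σ-ideal: it is invariant under all the shift endomorphisms. -/
def IsSigmaIdeal {K V : Type*} [CommSemiring K] {r : ℕ}
    (I : Ideal (MvPolynomial (V × (Fin r → ℕ)) K)) : Prop :=
  ∀ (σ : Fin r → ℕ) (p : MvPolynomial (V × (Fin r → ℕ)) K), p ∈ I → shiftPoly K σ p ∈ I

/-- The weight function `w : M → Σ̂ = Σ ∪ {0}` (here `Σ̂` is `WithBot (Fin r → ℕ)`,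
with `⊥` the extra element "0"):  `w(m)` is the `<`-maximum of the weights of the
variables occurring in `m`, where `<` is the given monomial ordering `loS` of `Σ`. -/
def wfun {V : Type*} {r : ℕ} (loS : LinearOrder (Fin r → ℕ))
    (m : (V × (Fin r → ℕ)) →₀ ℕ) : WithBot (Fin r → ℕ) :=
  @Finset.max _ loS (m.support.image (fun p => p.2))

/-- Addition in the idempotent semiring `Σ̂`: the maximum with respect to the
monomial ordering `loS` of `Σ`, with `⊥` as neutral element. -/
def hatAdd {r : ℕ} (loS : LinearOrder (Fin r → ℕ)) (a b : WithBot (Fin r → ℕ)) :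
    WithBot (Fin r → ℕ) :=
  @Max.max _ (@WithBot.linearOrder _ loS).toMax a b

/-- The order `≤` on `Σ̂` induced by the monomial ordering `loS` of `Σ`. -/
def hatLe {r : ℕ} (loS : LinearOrder (Fin r → ℕ)) (a b : WithBot (Fin r → ℕ)) : Prop :=
  @LE.le _ (@WithBot.linearOrder _ loS).toLE a b

/-- The strict order `<` on `Σ̂` induced by the monomial ordering `loS` of `Σ`. -/
def hatLt {r : ℕ} (loS : LinearOrder (Fin r → ℕ)) (a b : WithBot (Fin r → ℕ)) : Prop :=
  @LT.lt _ (@WithBot.linearOrder _ loS).toLT a b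

/-- The order function `ord : M → ℕ ∪ {−∞}`:  the maximum of `deg σ` over the
variables `x(σ)` occurring in `m` (and `−∞ = ⊥` for `m = 1`). -/
def ordFun {V : Type*} {r : ℕ} (m : (V × (Fin r → ℕ)) →₀ ℕ) : WithBot ℕ :=
  (m.support.image (fun p => degS p.2)).max

/-- A polynomial is `w`-homogeneous if all its monomials have the same weight. -/
def IsWHomog {K V : Type*} [CommSemiring K] {r : ℕ} (loS : LinearOrder (Fin r → ℕ))
    (f : MvPolynomial (V × (Fin r → ℕ)) K) : Prop :=
  ∀ m ∈ f.support, ∀ n ∈ f.support, wfun loS m = wfun loS n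

/-- A polynomial is `ord`-homogeneous if all its monomials have the same order. -/
def IsOrdHomog {K V : Type*} [CommSemiring K] {r : ℕ}
    (f : MvPolynomial (V × (Fin r → ℕ)) K) : Prop :=
  ∀ m ∈ f.support, ∀ n ∈ f.support, ordFun m = ordFun n

/-- The block `m(δ) ∈ M(δ) ≅ Mon(K[X])` of a monomial `m`, collecting the variables
of weight exactly `δ`. -/
def blockAt {X : Type*} {r : ℕ} (δ : Fin r → ℕ) (m : (X × (Fin r → ℕ)) →₀ ℕ) : X →₀ ℕ :=
  Finsupp.comapDomain (fun x => (x, δ)) m (fun _ _ _ _ h => congrArg Prod.fst h)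

/-- The weight Σ-ordering `≺_w` determined by a monomial ordering `ltS` of `Σ` and a
monomial ordering `lt1` of `P(1) = K[X(1)]` (transported to every block `P(δ)` via the
isomorphism `ρ(δ)`): compare the blocks of highest weight where the monomials differ. -/
def wlt {X : Type*} {r : ℕ} (ltS : (Fin r → ℕ) → (Fin r → ℕ) → Prop)
    (lt1 : (X →₀ ℕ) → (X →₀ ℕ) → Prop)
    (m n : (X × (Fin r → ℕ)) →₀ ℕ) : Prop :=
  ∃ δ : Fin r → ℕ, lt1 (blockAt δ m) (blockAt δ n) ∧
    ∀ ε : Fin r → ℕ, ltS δ ε → blockAt ε m = blockAt ε n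

/-- The block `m(x_j) ∈ M(x_j) ≅ Mon(K[x₀(Σ)])` of a monomial `m` (here `X = ℕ`),
collecting the variables of index exactly `j`. -/
def blockIdx {r : ℕ} (j : ℕ) (m : (ℕ × (Fin r → ℕ)) →₀ ℕ) : (Fin r → ℕ) →₀ ℕ :=
  Finsupp.comapDomain (fun σ => (j, σ)) m (fun _ _ _ _ h => congrArg Prod.snd h)

/-- The shift action of `σ ∈ Σ` on the monomials of `P(x₀) = K[x₀(Σ)]`. -/
def shiftMon0 {r : ℕ} (σ : Fin r → ℕ) (m : (Fin r → ℕ) →₀ ℕ) : (Fin r → ℕ) →₀ ℕ :=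
  Finsupp.mapDomain (fun τ => σ + τ) m

/-- The index Σ-ordering `≺_i` determined by a monomial Σ-ordering `lt0` of
`P(x₀) = K[x₀(Σ)]` (transported to every `P(x_j)` by the index shift): compare the
blocks of highest index where the monomials differ. -/
def ilt {r : ℕ} (lt0 : ((Fin r → ℕ) →₀ ℕ) → ((Fin r → ℕ) →₀ ℕ) → Prop)
    (m n : (ℕ × (Fin r → ℕ)) →₀ ℕ) : Prop :=
  ∃ j : ℕ, lt0 (blockIdx j m) (blockIdx j n) ∧ ∀ k : ℕ, j < k → blockIdx k m = blockIdx k n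

/- Homogenization setup:  `X̄ = X ∪ {t}` is modelled as `Option X`, with `none`
playing the role of the homogenizing variable `t` and `some x` that of `x ∈ X`;
thus `P̄ = K[X̄(Σ)] = MvPolynomial (Option X × (Fin r → ℕ)) K ⊇ P`. -/

/-- The inclusion `P = K[X(Σ)] ⊆ P̄ = K[X̄(Σ)]`. -/
def embP (K : Type*) [CommSemiring K] {X : Type*} {r : ℕ} :
    MvPolynomial (X × (Fin r → ℕ)) K →ₐ[K] MvPolynomial (Option X × (Fin r → ℕ)) K :=
  MvPolynomial.rename (fun p => (some p.1, p.2))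

/-- The inclusion `Mon(P) ⊆ Mon(P̄)` on monomials. -/
def embMon {X : Type*} {r : ℕ} (m : (X × (Fin r → ℕ)) →₀ ℕ) :
    (Option X × (Fin r → ℕ)) →₀ ℕ :=
  Finsupp.mapDomain (fun p => (some p.1, p.2)) m

/-- The dehomogenization Σ-endomorphism `φ : P̄ → P̄` with `x(σ) ↦ x(σ)`,
`t(σ) ↦ 1`. -/
def phiBar (K : Type*) [CommSemiring K] {X : Type*} {r : ℕ} :
    MvPolynomial (Option X × (Fin r → ℕ)) K →ₐ[K]
      MvPolynomial (Option X × (Fin r → ℕ)) K :=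
  MvPolynomial.aeval (fun p => p.1.elim 1 (fun x => MvPolynomial.X (some x, p.2)))

/-- The dehomogenization map `P̄ → P` with `x(σ) ↦ x(σ)`, `t(σ) ↦ 1`. -/
def dehom (K : Type*) [CommSemiring K] {X : Type*} {r : ℕ} :
    MvPolynomial (Option X × (Fin r → ℕ)) K →ₐ[K] MvPolynomial (X × (Fin r → ℕ)) K :=
  MvPolynomial.aeval (fun p => p.1.elim 1 (fun x => MvPolynomial.X (x, p.2)))

/-- `N`, the largest `ord`-graded Σ-ideal of `P̄` contained in `ker φ`: the ideal
generated by all `ord`-homogeneous elements of `ker φ`. -/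
def Nideal (K : Type*) [CommSemiring K] (X : Type*) (r : ℕ) :
    Ideal (MvPolynomial (Option X × (Fin r → ℕ)) K) :=
  Ideal.span {f | IsOrdHomog f ∧ phiBar K f = 0}

/-- The top order of a polynomial: the maximum of the orders of its monomials. -/
def topord {K V : Type*} [CommSemiring K] {r : ℕ}
    (f : MvPolynomial (V × (Fin r → ℕ)) K) : WithBot ℕ :=
  f.support.sup (fun m => ordFun m)

/-- The `ord`-homogenization `I*` of an ideal `I ⊆ P`: the ideal of `P̄` generated by
all `ord`-homogeneous elements of `φ⁻¹(I)`. -/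
def Istar {K : Type*} [Field K] {X : Type*} {r : ℕ}
    (I : Ideal (MvPolynomial (X × (Fin r → ℕ)) K)) :
    Ideal (MvPolynomial (Option X × (Fin r → ℕ)) K) :=
  Ideal.span {f | IsOrdHomog f ∧ dehom K f ∈ I}

/-- A monomial of `P̄` is `t`-free when it lies in `M = Mon(P)`. -/
def TFree {X : Type*} {r : ℕ} (m : (Option X × (Fin r → ℕ)) →₀ ℕ) : Prop :=
  ∀ p ∈ m.support, p.1 ≠ (none : Option X)

/-- A monomial of `P̄` is normal modulo `N` if it is of the form `m ∈ M`, or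
`t(σ)·n` with `n ∈ M`, `deg σ > ord n` and `t(σ)` the `≺`-least variable `t(τ)`
with `deg τ = deg σ`. -/
def NormalMon {X : Type*} {r : ℕ} (lo : LinearOrder ((Option X × (Fin r → ℕ)) →₀ ℕ))
    (m : (Option X × (Fin r → ℕ)) →₀ ℕ) : Prop :=
  TFree m ∨ ∃ (σ : Fin r → ℕ) (n : (Option X × (Fin r → ℕ)) →₀ ℕ),
    TFree n ∧ ordFun n < (degS σ : WithBot ℕ) ∧
    m = Finsupp.single ((none : Option X), σ) 1 + n ∧
    ∀ τ : Fin r → ℕ, degS τ = degS σ →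
      oLE lo (Finsupp.single ((none : Option X), σ) 1)
        (Finsupp.single ((none : Option X), τ) 1)

/-- `lo` is an `ord`-homogenization Σ-ordering of `P̄`: it is compatible with the
order function, and `t(σ)·m ≺ n` whenever `m, n ∈ M` and `deg σ = ord n > ord m`. -/
def IsHomogOrd {X : Type*} {r : ℕ}
    (lo : LinearOrder ((Option X × (Fin r → ℕ)) →₀ ℕ)) : Prop :=
  (∀ m n : (Option X × (Fin r → ℕ)) →₀ ℕ, ordFun m < ordFun n → oLT lo m n) ∧
  ∀ (m n : (Option X × (Fin r → ℕ)) →₀ ℕ) (σ : Fin r → ℕ),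
    TFree m → TFree n → (degS σ : WithBot ℕ) = ordFun n → ordFun m < ordFun n →
    oLT lo (Finsupp.single ((none : Option X), σ) 1 + m) n

end

/-! Since `X` is finite, only finitely many variables `x(σ)` have order at most `d`, so by
Dickson's lemma the leading monomials of the ord-homogeneous elements of `I` of order `≤ d`
have finitely many minimal elements; one representative for each of them, together with all
ord-homogeneous elements of `I` of order `> d`, is a Gröbner Σ-basis. That it suffices to
look at ord-homogeneous elements comes from `I` being ord-graded: the ord-homogeneous
component of `f ∈ I` containing `lm(f)` again lies in `I` and has leading monomial `lm(f)`. -/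

open MvPolynomial

theorem Set.IsPWO.exists_finite_subset_forall_exists_le {α : Type*} [PartialOrder α]
    {S : Set α} (hS : S.IsPWO) : ∃ B ⊆ S, B.Finite ∧ ∀ s ∈ S, ∃ b ∈ B, b ≤ s := by
  refine ⟨{x | Minimal (· ∈ S) x}, setOfPred_minimal_subset S, ?_, fun s hs => ?_⟩
  · exact (setOfPred_minimal_antichain _).finite_of_partiallyWellOrderedOn
      (hS.mono (setOfPred_minimal_subset S))
  · obtain ⟨b, hbs, hb⟩ := hS.exists_le_minimal hs
    exact ⟨b, hb, hbs⟩

theorem Finsupp.isPWO_of_support_subset {α M : Type*} [Zero M] [Preorder M]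
    [WellQuasiOrderedLE M] {T : Set α} (hT : T.Finite) {S : Set (α →₀ M)}
    (hS : ∀ m ∈ S, ↑m.support ⊆ T) : S.IsPWO := by
  classical
  have : Finite T := hT.to_subtype
  have hmono : Monotone fun u : T →₀ M => u.extendDomain := by
    intro u v huv x
    simp only [Finsupp.extendDomain_apply]
    split_ifs
    exacts [huv _, le_rfl]
  refine ((Set.isPWO_of_wellQuasiOrderedLE Set.univ).image_of_monotone hmono).mono ?_
  intro m hm
  exact ⟨m.subtypeDomain (· ∈ T), trivial,
    Finsupp.extendDomain_subtypeDomain _ fun p hp => hS m hm hp⟩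

section LeadingMonomial

variable {R V : Type*} [CommSemiring R] {r : ℕ}
  (lo : LinearOrder ((V × (Fin r → ℕ)) →₀ ℕ))

theorem lmo_mem_support {f : MvPolynomial (V × (Fin r → ℕ)) R} (hf : f ≠ 0) :
    lmo lo f ∈ f.support := by
  rw [lmo, dif_neg hf]
  exact @Finset.max'_mem _ lo _ _

theorem le_lmo {f : MvPolynomial (V × (Fin r → ℕ)) R} {m : (V × (Fin r → ℕ)) →₀ ℕ}
    (hm : m ∈ f.support) : oLE lo m (lmo lo f) := by
  have hf : f ≠ 0 := by rintro rfl; simp at hm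
  rw [lmo, dif_neg hf]
  exact @Finset.le_max' _ lo _ _ hm

theorem lmo_eq_of_support_subset {f g : MvPolynomial (V × (Fin r → ℕ)) R}
    (hsub : g.support ⊆ f.support) (hmem : lmo lo f ∈ g.support) : lmo lo g = lmo lo f :=
  lo.le_antisymm _ _ (le_lmo lo (hsub (lmo_mem_support lo (by rintro rfl; simp at hmem))))
    (le_lmo lo hmem)

end LeadingMonomial

section Shift

variable {R V : Type*} [CommSemiring R] {r : ℕ}

theorem shiftMon_zero (m : (V × (Fin r → ℕ)) →₀ ℕ) : shiftMon 0 m = m := by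
  simp only [shiftMon, zero_add, Prod.mk.eta]
  exact Finsupp.mapDomain_id

theorem shift_injective (σ : Fin r → ℕ) :
    Function.Injective fun p : V × (Fin r → ℕ) => (p.1, σ + p.2) := fun _ _ h =>
  Prod.ext (Prod.ext_iff.1 h).1 (add_left_cancel (Prod.ext_iff.1 h).2)

theorem shiftPoly_injective (σ : Fin r → ℕ) :
    Function.Injective (shiftPoly R σ : MvPolynomial (V × (Fin r → ℕ)) R → _) :=
  rename_injective _ (shift_injective σ)

theorem support_shiftPoly [DecidableEq V] (σ : Fin r → ℕ)
    (g : MvPolynomial (V × (Fin r → ℕ)) R) :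
    (shiftPoly R σ g).support = g.support.image (shiftMon σ) :=
  support_rename_of_injective (shift_injective σ)

theorem lmo_shiftPoly (lo : LinearOrder ((V × (Fin r → ℕ)) →₀ ℕ)) {σ : Fin r → ℕ}
    (hσ : ∀ m n, oLT lo m n → oLT lo (shiftMon σ m) (shiftMon σ n))
    (g : MvPolynomial (V × (Fin r → ℕ)) R) :
    lmo lo (shiftPoly R σ g) = shiftMon σ (lmo lo g) := by
  classical
  by_cases hg : g = 0
  · simp [hg, lmo, shiftMon]
  have hσg : shiftPoly R σ g ≠ 0 := (map_ne_zero_iff _ (shiftPoly_injective σ)).2 hg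
  rw [lmo, lmo, dif_neg hg, dif_neg hσg]
  simp only [support_shiftPoly]
  convert @Finset.max'_image _ _ lo lo _
    (@StrictMono.monotone _ _ lo.toPartialOrder lo.toPreorder _ hσ) _ ?_
  simpa using hg

end Shift

section OrdComponent

variable {R V : Type*} [CommSemiring R] {r : ℕ}

theorem ordFun_add (a b : (V × (Fin r → ℕ)) →₀ ℕ) :
    ordFun (a + b) = ordFun a ⊔ ordFun b := by
  classical
  rw [ordFun, ordFun, ordFun, Finsupp.support_add_eq_union, Finset.image_union, Finset.max_union]

theorem degS_le_ordFun {m : (V × (Fin r → ℕ)) →₀ ℕ} {p : V × (Fin r → ℕ)}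
    (hp : p ∈ m.support) : (degS p.2 : WithBot ℕ) ≤ ordFun m :=
  Finset.le_max (Finset.mem_image_of_mem _ hp)

theorem IsOrdHomog.monomial_mul {h : MvPolynomial (V × (Fin r → ℕ)) R} (hh : IsOrdHomog h)
    (a : (V × (Fin r → ℕ)) →₀ ℕ) (c : R) : IsOrdHomog (monomial a c * h) := by
  have hsupp : ∀ m ∈ (monomial a c * h).support, ∃ b ∈ h.support, m = a + b := by
    intro m hm
    rw [mem_support_iff, coeff_monomial_mul'] at hm
    split_ifs at hm with ham
    · exact ⟨m - a, mem_support_iff.2 (right_ne_zero_of_mul hm),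
        (add_tsub_cancel_of_le ham).symm⟩
    · exact absurd rfl hm
  intro m hm n hn
  obtain ⟨b, hb, rfl⟩ := hsupp m hm
  obtain ⟨b', hb', rfl⟩ := hsupp n hn
  rw [ordFun_add, ordFun_add, hh b hb b' hb']

def ordComponent (e : WithBot ℕ) :
    MvPolynomial (V × (Fin r → ℕ)) R →+ MvPolynomial (V × (Fin r → ℕ)) R where
  toFun f := AddMonoidAlgebra.ofCoeff ((AddMonoidAlgebra.coeff f).filter (ordFun · = e))
  map_zero' := by rw [AddMonoidAlgebra.coeff_zero, Finsupp.filter_zero]; rfl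
  map_add' f g := by rw [AddMonoidAlgebra.coeff_add, Finsupp.filter_add]; rfl

theorem coeff_ordComponent (e : WithBot ℕ) (f : MvPolynomial (V × (Fin r → ℕ)) R)
    (m : (V × (Fin r → ℕ)) →₀ ℕ) :
    coeff m (ordComponent e f) = if ordFun m = e then coeff m f else 0 :=
  Finsupp.filter_apply _ _ m

theorem mem_support_ordComponent {e : WithBot ℕ} {f : MvPolynomial (V × (Fin r → ℕ)) R}
    {m : (V × (Fin r → ℕ)) →₀ ℕ} :
    m ∈ (ordComponent e f).support ↔ m ∈ f.support ∧ ordFun m = e := by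
  rw [mem_support_iff, mem_support_iff, coeff_ordComponent]
  split_ifs with hm <;> simp [hm]

theorem isOrdHomog_ordComponent (e : WithBot ℕ) (f : MvPolynomial (V × (Fin r → ℕ)) R) :
    IsOrdHomog (ordComponent e f) := fun _ hm _ hn =>
  (mem_support_ordComponent.1 hm).2.trans (mem_support_ordComponent.1 hn).2.symm

theorem IsOrdHomog.ordComponent_eq {f : MvPolynomial (V × (Fin r → ℕ)) R} (hf : IsOrdHomog f)
    (e : WithBot ℕ) : ordComponent e f = f ∨ ordComponent e f = 0 := by
  by_cases he : ∀ m ∈ f.support, ordFun m = e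
  · left
    ext m
    rw [coeff_ordComponent]
    split_ifs with hm
    · rfl
    · exact (notMem_support_iff.1 fun hm' => hm (he m hm')).symm
  · right
    push Not at he
    obtain ⟨m₀, hm₀, hne⟩ := he
    ext m
    rw [coeff_ordComponent, coeff_zero]
    split_ifs with hm
    · exact notMem_support_iff.1 fun hm' => hne ((hf m₀ hm₀ m hm').trans hm)
    · rfl

variable {I : Ideal (MvPolynomial (V × (Fin r → ℕ)) R)}

theorem ordComponent_mul_mem {g : MvPolynomial (V × (Fin r → ℕ)) R} (hgI : g ∈ I)
    (hg : IsOrdHomog g) (e : WithBot ℕ) (p : MvPolynomial (V × (Fin r → ℕ)) R) :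
    ordComponent e (p * g) ∈ I := by
  induction p using MvPolynomial.induction_on' with
  | monomial a c =>
    rcases (hg.monomial_mul a c).ordComponent_eq e with h | h <;> rw [h]
    exacts [I.mul_mem_left _ hgI, I.zero_mem]
  | add p q hp hq =>
    rw [add_mul, map_add]
    exact I.add_mem hp hq

theorem ordComponent_mem (hI : I = Ideal.span {f | f ∈ I ∧ IsOrdHomog f})
    {f : MvPolynomial (V × (Fin r → ℕ)) R} (hf : f ∈ I) (e : WithBot ℕ) :
    ordComponent e f ∈ I := by
  suffices ∀ p, ordComponent e (p * f) ∈ I by simpa using this 1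
  rw [hI] at hf
  induction hf using Submodule.span_induction with
  | mem x hx => exact ordComponent_mul_mem hx.1 hx.2 e
  | zero => simp
  | add x y _ _ hx hy =>
    intro p
    rw [mul_add, map_add]
    exact I.add_mem (hx p) (hy p)
  | smul a x _ hx =>
    intro p
    rw [smul_eq_mul, ← mul_assoc]
    exact hx (p * a)

theorem exists_isOrdHomog_lmo_eq (lo : LinearOrder ((V × (Fin r → ℕ)) →₀ ℕ))
    (hI : I = Ideal.span {f | f ∈ I ∧ IsOrdHomog f}) {f : MvPolynomial (V × (Fin r → ℕ)) R}
    (hfI : f ∈ I) (hf : f ≠ 0) :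
    ∃ g ∈ I, g ≠ 0 ∧ IsOrdHomog g ∧ lmo lo g = lmo lo f := by
  set g := ordComponent (ordFun (lmo lo f)) f
  have hmem : lmo lo f ∈ g.support :=
    mem_support_ordComponent.2 ⟨lmo_mem_support lo hf, rfl⟩
  refine ⟨g, ordComponent_mem hI hfI _, ?_, isOrdHomog_ordComponent _ f,
    lmo_eq_of_support_subset lo (fun m hm => (mem_support_ordComponent.1 hm).1) hmem⟩
  intro hg
  simp [hg] at hmem

end OrdComponent

theorem isSigmaGBasis_of_forall_exists_lmo_le {K V : Type*} [Field K] {r : ℕ}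
    (lo : LinearOrder ((V × (Fin r → ℕ)) →₀ ℕ))
    (hshift : ∀ (σ : Fin r → ℕ) (m n : (V × (Fin r → ℕ)) →₀ ℕ),
      oLT lo m n → oLT lo (shiftMon σ m) (shiftMon σ n))
    {I : Ideal (MvPolynomial (V × (Fin r → ℕ)) K)} (hI : IsSigmaIdeal I)
    {G : Set (MvPolynomial (V × (Fin r → ℕ)) K)} (hGI : G ⊆ I)
    (hG : ∀ f ∈ I, f ≠ 0 → ∃ g ∈ G, g ≠ 0 ∧ lmo lo g ≤ lmo lo f) :
    IsSigmaGBasis lo G I := by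
  refine ⟨hGI, le_antisymm ?_ ?_⟩
  · rw [lmIdeal, Ideal.span_le]
    rintro _ ⟨f, ⟨hfI, hf⟩, rfl⟩
    obtain ⟨g, hgG, hg, hgf⟩ := hG f hfI hf
    have hdvd : monomial (lmo lo f) (1 : K) =
        monomial (lmo lo f - lmo lo g) 1 * monomial (shiftMon 0 (lmo lo g)) 1 := by
      rw [shiftMon_zero, monomial_mul, one_mul, tsub_add_cancel_of_le hgf]
    change monomial (lmo lo f) (1 : K) ∈ _
    rw [hdvd]
    exact Ideal.mul_mem_left _ _ (Ideal.subset_span ⟨0, g, hgG, hg, rfl⟩)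
  · rw [Ideal.span_le]
    rintro _ ⟨σ, g, hgG, hg, rfl⟩
    refine Ideal.subset_span ⟨shiftPoly K σ g, ⟨hI σ g (hGI hgG), ?_⟩, ?_⟩
    · exact (map_ne_zero_iff _ (shiftPoly_injective σ)).2 hg
    · exact congrArg (monomial · 1) (lmo_shiftPoly lo (hshift σ) g)

theorem finite_setOf_degS_le (r d : ℕ) : {σ : Fin r → ℕ | degS σ ≤ d}.Finite :=
  (Set.finite_Icc 0 fun _ => d).subset fun σ hσ =>
    ⟨fun _ => Nat.zero_le _, fun i => (Finset.single_le_sum (fun j _ => Nat.zero_le (σ j))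
      (Finset.mem_univ i)).trans hσ⟩

theorem exists_finite_subset_forall_exists_lmo_le {R V : Type*} [CommSemiring R] [Finite V]
    {r : ℕ} (lo : LinearOrder ((V × (Fin r → ℕ)) →₀ ℕ)) (d : ℕ)
    {S : Set (MvPolynomial (V × (Fin r → ℕ)) R)}
    (hS : ∀ f ∈ S, ∀ m ∈ f.support, ordFun m ≤ (d : WithBot ℕ)) :
    ∃ F ⊆ S, F.Finite ∧ ∀ f ∈ S, ∃ g ∈ F, lmo lo g ≤ lmo lo f := by
  have hvars :
      ∀ m ∈ lmo lo '' S, ↑m.support ⊆ {p : V × (Fin r → ℕ) | degS p.2 ≤ d} := by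
    rintro _ ⟨f, hf, rfl⟩ p hp
    have hf0 : f ≠ 0 := by rintro rfl; simp [lmo] at hp
    exact WithBot.coe_le_coe.1 ((degS_le_ordFun hp).trans (hS f hf _ (lmo_mem_support lo hf0)))
  have hPWO := Finsupp.isPWO_of_support_subset
    (Set.finite_univ.prod (finite_setOf_degS_le r d))
    (fun m hm p hp => ⟨trivial, hvars m hm hp⟩)
  obtain ⟨F, hFS, hFfin, hF⟩ := Set.exists_subset_image_finite_and.1
    hPWO.exists_finite_subset_forall_exists_le
  refine ⟨F, hFS, hFfin, fun f hf => ?_⟩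
  obtain ⟨_, ⟨g, hgF, rfl⟩, hle⟩ := hF _ ⟨f, hf, rfl⟩
  exact ⟨g, hgF, hle⟩

theorem statement_13_general {K : Type*} [Field K] {X : Type*} [Fintype X] {r : ℕ}
    (lo : LinearOrder ((X × (Fin r → ℕ)) →₀ ℕ))
    (hshift : ∀ (σ : Fin r → ℕ) (m n : (X × (Fin r → ℕ)) →₀ ℕ),
      oLT lo m n → oLT lo (shiftMon σ m) (shiftMon σ n))
    (I : Ideal (MvPolynomial (X × (Fin r → ℕ)) K))
    (hIsig : IsSigmaIdeal I)
    (hIgr : I = Ideal.span {f | f ∈ I ∧ IsOrdHomog f})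
    (d : ℕ) :
    ∃ G : Set (MvPolynomial (X × (Fin r → ℕ)) K),
      (∀ f ∈ G, IsOrdHomog f) ∧ IsSigmaGBasis lo G I ∧
      {f | f ∈ G ∧ ∀ m ∈ f.support, ordFun m ≤ (d : WithBot ℕ)}.Finite := by
  set low := fun f : MvPolynomial (X × (Fin r → ℕ)) K =>
    ∀ m ∈ f.support, ordFun m ≤ (d : WithBot ℕ)
  obtain ⟨F, hFS, hFfin, hF⟩ := exists_finite_subset_forall_exists_lmo_le lo d
    (S := {f | f ∈ I ∧ f ≠ 0 ∧ IsOrdHomog f ∧ low f}) fun f hf => hf.2.2.2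
  set high := {f | f ∈ I ∧ f ≠ 0 ∧ IsOrdHomog f ∧ ¬ low f}
  refine ⟨F ∪ high, ?_, isSigmaGBasis_of_forall_exists_lmo_le lo hshift hIsig ?_ ?_,
    hFfin.subset ?_⟩
  · rintro f (hf | hf)
    exacts [(hFS hf).2.2.1, hf.2.2.1]
  · rintro f (hf | hf)
    exacts [(hFS hf).1, hf.1]
  · intro f hfI hf
    obtain ⟨g, hgI, hg, hg_homog, hgf⟩ := exists_isOrdHomog_lmo_eq lo hIgr hfI hf
    by_cases hlow : low g
    · obtain ⟨g', hg'F, hle⟩ := hF g ⟨hgI, hg, hg_homog, hlow⟩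
      exact ⟨g', Or.inl hg'F, (hFS hg'F).2.1, hgf ▸ hle⟩
    · exact ⟨g, Or.inr ⟨hgI, hg, hg_homog, hlow⟩, hg, hgf.le⟩
  · rintro f ⟨hf | hf, hlow⟩
    exacts [hf, absurd hlow hf.2.2.2]

/-- **truncated termination over the order.** `X` finite, `P` endowed
with a monomial Σ-ordering. If an `ord`-graded Σ-ideal `I ⊆ P` has an
`ord`-homogeneous Σ-basis `H` with `H_d = {f ∈ H : ord(f) ≤ d}` finite, then `I` has
an `ord`-homogeneous Gröbner Σ-basis `G` with `G_d` finite. -/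
theorem statement_13 {K : Type*} [Field K] {X : Type*} [Fintype X] {r : ℕ}
    (lo : LinearOrder ((X × (Fin r → ℕ)) →₀ ℕ)) (h : IsMonOrd lo)
    (hshift : ∀ (σ : Fin r → ℕ) (m n : (X × (Fin r → ℕ)) →₀ ℕ),
      oLT lo m n → oLT lo (shiftMon σ m) (shiftMon σ n))
    (I : Ideal (MvPolynomial (X × (Fin r → ℕ)) K))
    (hIsig : IsSigmaIdeal I)
    (hIgr : I = Ideal.span {f | f ∈ I ∧ IsOrdHomog f})
    (d : ℕ)
    (H : Set (MvPolynomial (X × (Fin r → ℕ)) K))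
    (hHI : H ⊆ ↑I)
    (hHhom : ∀ f ∈ H, IsOrdHomog f)
    (hHgen : I = Ideal.span (shiftSet K H))
    (hHfin : {f | f ∈ H ∧ ∀ m ∈ f.support, ordFun m ≤ (d : WithBot ℕ)}.Finite) :
    ∃ G : Set (MvPolynomial (X × (Fin r → ℕ)) K),
      (∀ f ∈ G, IsOrdHomog f) ∧ IsSigmaGBasis lo G I ∧
      {f | f ∈ G ∧ ∀ m ∈ f.support, ordFun m ≤ (d : WithBot ℕ)}.Finite :=
  statement_13_general lo hshift I hIsig hIgr d
end

section
/- Let ≺_w be a weight Σ-ordering of P, defined from a monomial ordering < of Σ and a monomial ordering of P(1) = K[X(1)] extended by blocks in decreasing weight order. Then ≺_w is compatible with the weight function: w(m) < w(n) implies m ≺_w n for all monomials m, n ∈ M. If moreover the monomial ordering < of Σ is compatible with deg (i.e., deg(σ) < deg(τ) implies σ < τ), then ≺_w is also compatible with the order function: ord(m) < ord(n) implies m ≺_w n. -/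
/-! At `δ = w(n)` the block of `n` is nontrivial while that of `m` is `1`, since every
variable of `m` has weight below `δ`; above `δ` both blocks are `1`. As `1` is the least
monomial of `P(1)`, this gives `m ≺_w n`. When `<` refines `deg`, a variable of `n` of maximal
degree has larger weight than every variable of `m`, so `ord(m) < ord(n)` forces
`w(m) < w(n)`. -/

theorem Finset.max_lt_coe_iff {α : Type*} [LinearOrder α] {s : Finset α} {a : α} :
    s.max < a ↔ ∀ b ∈ s, b < a := by
  rw [Finset.max_eq_sup_withBot, Finset.sup_lt_iff (WithBot.bot_lt_coe a)]
  simp only [WithBot.coe_lt_coe]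

section WeightOrdering

variable {X : Type*} {r : ℕ}

-- `Fin r → ℕ` also carries the componentwise order globally, hence the explicit `@ … loS`.

theorem blockAt_eq_zero_iff {δ : Fin r → ℕ} {m : (X × (Fin r → ℕ)) →₀ ℕ} :
    blockAt δ m = 0 ↔ ∀ x, (x, δ) ∉ m.support := by
  simp only [Finsupp.ext_iff, Finsupp.mem_support_iff, not_not]
  rfl

theorem le_wfun (loS : LinearOrder (Fin r → ℕ)) {m : (X × (Fin r → ℕ)) →₀ ℕ}
    {p : X × (Fin r → ℕ)} (hp : p ∈ m.support) : hatLe loS p.2 (wfun loS m) :=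
  Finset.le_max (Finset.mem_image_of_mem _ hp)

theorem wfun_lt_coe_iff (loS : LinearOrder (Fin r → ℕ)) {m : (X × (Fin r → ℕ)) →₀ ℕ}
    {τ : Fin r → ℕ} : hatLt loS (wfun loS m) τ ↔ ∀ p ∈ m.support, oLT loS p.2 τ :=
  (@Finset.max_lt_coe_iff _ loS _ τ).trans Finset.forall_mem_image

theorem blockAt_eq_zero_of_wfun_lt (loS : LinearOrder (Fin r → ℕ))
    {m : (X × (Fin r → ℕ)) →₀ ℕ} {δ : Fin r → ℕ} (h : hatLt loS (wfun loS m) δ) :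
    blockAt δ m = 0 :=
  blockAt_eq_zero_iff.2 fun _ hp =>
    (@lt_irrefl _ loS.toPreorder δ) ((wfun_lt_coe_iff loS).1 h _ hp)

theorem exists_mem_support_wfun_eq (loS : LinearOrder (Fin r → ℕ)) {a : WithBot (Fin r → ℕ)}
    {n : (X × (Fin r → ℕ)) →₀ ℕ} (h : hatLt loS a (wfun loS n)) :
    ∃ p ∈ n.support, wfun loS n = p.2 := by
  cases hw : wfun loS n with
  | bot => rw [hw] at h; exact absurd h (@WithBot.not_lt_bot _ loS.toLT a)
  | coe δ =>
    obtain ⟨p, hp, rfl⟩ := Finset.mem_image.1 (@Finset.mem_of_max _ loS _ _ hw)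
    exact ⟨p, hp, rfl⟩

theorem wlt_of_wfun_lt (loS : LinearOrder (Fin r → ℕ)) {lo1 : LinearOrder (X →₀ ℕ)}
    (h0 : ∀ a, oLE lo1 0 a) {m n : (X × (Fin r → ℕ)) →₀ ℕ}
    (h : hatLt loS (wfun loS m) (wfun loS n)) : wlt (oLT loS) (oLT lo1) m n := by
  obtain ⟨⟨x, δ⟩, hp, hδ⟩ := exists_mem_support_wfun_eq loS h
  rw [hδ] at h
  have hm : blockAt δ m = 0 := blockAt_eq_zero_of_wfun_lt loS h
  have hn : blockAt δ n ≠ 0 := fun hn => blockAt_eq_zero_iff.1 hn x hp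
  refine ⟨δ, ?_, fun ε hε => ?_⟩
  · rw [hm]
    exact @lt_of_le_of_ne _ lo1.toPartialOrder _ _ (h0 _) hn.symm
  · have hδε : hatLt loS δ ε := (@WithBot.coe_lt_coe _ _ _ loS.toLT).2 hε
    have hmε := @lt_trans _ (@WithBot.linearOrder _ loS).toPreorder _ _ _ h hδε
    rw [blockAt_eq_zero_of_wfun_lt loS hmε, blockAt_eq_zero_of_wfun_lt loS (hδ ▸ hδε)]

theorem wfun_lt_of_ordFun_lt (loS : LinearOrder (Fin r → ℕ))
    (hdeg : ∀ σ τ : Fin r → ℕ, degS σ < degS τ → oLT loS σ τ)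
    {m n : (X × (Fin r → ℕ)) →₀ ℕ} (h : ordFun m < ordFun n) :
    hatLt loS (wfun loS m) (wfun loS n) := by
  obtain ⟨d, hd⟩ := WithBot.ne_bot_iff_exists.1 (ne_bot_of_gt h)
  obtain ⟨p, hp, rfl⟩ := Finset.mem_image.1 (Finset.mem_of_max hd.symm)
  have hmp : hatLt loS (wfun loS m) p.2 := (wfun_lt_coe_iff loS).2 fun q hq =>
    hdeg _ _ <| WithBot.coe_lt_coe.1 <|
      (Finset.le_max (Finset.mem_image_of_mem _ hq)).trans_lt (hd ▸ h)
  exact @lt_of_lt_of_le _ (@WithBot.linearOrder _ loS).toPreorder _ _ _ hmp (le_wfun loS hp)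

end WeightOrdering

theorem statement_14_general {X : Type*} {r : ℕ}
    (loS : LinearOrder (Fin r → ℕ))
    (lo1 : LinearOrder (X →₀ ℕ)) (h1 : IsMonOrd lo1) :
    (∀ m n : (X × (Fin r → ℕ)) →₀ ℕ,
        hatLt loS (wfun loS m) (wfun loS n) → wlt (oLT loS) (oLT lo1) m n) ∧
    ((∀ σ τ : Fin r → ℕ, degS σ < degS τ → oLT loS σ τ) →
      ∀ m n : (X × (Fin r → ℕ)) →₀ ℕ,
        ordFun m < ordFun n → wlt (oLT loS) (oLT lo1) m n) :=
  ⟨fun _ _ => wlt_of_wfun_lt loS h1.zero_le,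
    fun hdeg _ _ h => wlt_of_wfun_lt loS h1.zero_le (wfun_lt_of_ordFun_lt loS hdeg h)⟩

/-- A weight Σ-ordering `≺_w` is compatible with the weight
function: `w(m) < w(n)` implies `m ≺_w n`. If moreover the monomial ordering of `Σ`
is compatible with `deg`, then `≺_w` is also compatible with the order function:
`ord(m) < ord(n)` implies `m ≺_w n`. -/
theorem statement_14 {X : Type*} [Countable X] {r : ℕ}
    (loS : LinearOrder (Fin r → ℕ)) (hS : IsMonOrd loS)
    (lo1 : LinearOrder (X →₀ ℕ)) (h1 : IsMonOrd lo1) :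
    (∀ m n : (X × (Fin r → ℕ)) →₀ ℕ,
        hatLt loS (wfun loS m) (wfun loS n) → wlt (oLT loS) (oLT lo1) m n) ∧
    ((∀ σ τ : Fin r → ℕ, degS σ < degS τ → oLT loS σ τ) →
      ∀ m n : (X × (Fin r → ℕ)) →₀ ℕ,
        ordFun m < ordFun n → wlt (oLT loS) (oLT lo1) m n) :=
  statement_14_general loS lo1 h1
end
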